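/- For P ∈ V_n^d and Q ∈ T_P V_n^d, the retraction R_P(Q) = Π_{θ(P+Q)}(P+Q) admits the explicit expression R_P(Q) = (P(ū) + Q(ū)) · (u^t x)^d, where u = θ(P+Q) is a unit-norm first left singular vector of H_{P+Q}^{1,d−1} and ū is its componentwise conjugate. -/

import Mathlib

noncomputable section

open Matrix

/-- The apolar product `⟨P,Q⟩ = Σ_α conj(P_α) Q_α / C(d,α)`. -/
def apolar {n : ℕ} (P Q : MvPolynomial (Fin n) ℂ) : ℂ :=
  ∑ α ∈ P.support ∪ Q.support,
    starRingEnd ℂ (P.coeff α) * Q.coeff α / (Finsupp.multinomial α : ℂ)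

/-- The linear form `vᵗx`. -/
def linForm {n : ℕ} (v : Fin n → ℂ) : MvPolynomial (Fin n) ℂ :=
  ∑ i, MvPolynomial.C (v i) * MvPolynomial.X i

/-- `Φ(v) = (vᵗx)^d`. -/
def linPow {n : ℕ} (v : Fin n → ℂ) (d : ℕ) : MvPolynomial (Fin n) ℂ :=
  linForm v ^ d

/-- `Π_v(Q) = (⟨Φ(v), Q⟩_d / ‖Φ(v)‖_d²) Φ(v)`. -/
def projLine {n : ℕ} (d : ℕ) (v : Fin n → ℂ) (Q : MvPolynomial (Fin n) ℂ) :
    MvPolynomial (Fin n) ℂ :=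
  (apolar (linPow v d) Q / apolar (linPow v d) (linPow v d)) • linPow v d

/-- Entry `(e_i, β)` of the Hankel matrix `H_P^{1,d-1}`. -/
def hankelEntry {n : ℕ} (P : MvPolynomial (Fin n) ℂ) (i : Fin n) (β : Fin n → ℕ) : ℂ :=
  apolar P
    (MvPolynomial.monomial (Finsupp.single i 1 + Finsupp.equivFunOnFinite.symm β) 1)

/-- The Gram matrix `H_P^{1,d-1} (H_P^{1,d-1})^*`. -/
def gram {n : ℕ} (d : ℕ) (P : MvPolynomial (Fin n) ℂ) : Matrix (Fin n) (Fin n) ℂ :=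
  fun i j => ∑ β ∈ Finset.Nat.antidiagonalTuple n (d - 1),
    hankelEntry P i β * starRingEnd ℂ (hankelEntry P j β)

/-- `u` is a first left singular vector of `H_P^{1,d-1}`. -/
def IsFirstLeftSingular {n : ℕ} (d : ℕ) (P : MvPolynomial (Fin n) ℂ)
    (u : Fin n → ℂ) : Prop :=
  u ≠ 0 ∧ ∃ μ : ℝ, gram d P *ᵥ u = (μ : ℂ) • u ∧
    ∀ (w : Fin n → ℂ) (ν : ℝ), w ≠ 0 → gram d P *ᵥ w = (ν : ℂ) • w → ν ≤ μ

open Finset MvPolynomial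

theorem multinomial_univ_eq {n : ℕ} (α : Fin n →₀ ℕ) :
    Nat.multinomial Finset.univ ⇑α = α.multinomial := by
  rw [Finsupp.multinomial_eq]
  unfold Nat.multinomial
  have h1 : ∑ i ∈ α.support, α i = ∑ x : Fin n, α x :=
    Finset.sum_subset (subset_univ _) fun x _ hx => Finsupp.notMem_support_iff.mp hx
  have h2 : ∏ i ∈ α.support, (α i).factorial = ∏ x : Fin n, (α x).factorial :=
    Finset.prod_subset (subset_univ _) fun x _ hx => by
      simp [Finsupp.notMem_support_iff.mp hx]
  rw [h1, h2]

theorem coeff_linPow {n d : ℕ} (u : Fin n → ℂ) (α : Fin n →₀ ℕ) :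
    (linPow u d).coeff α =
      if (∑ i, α i) = d then (α.multinomial : ℂ) * ∏ i, u i ^ α i else 0 := by
  unfold linPow linForm
  rw [Finset.sum_pow_eq_sum_piAntidiag]
  have key : ∀ k : Fin n → ℕ,
      (Nat.multinomial univ k : MvPolynomial (Fin n) ℂ) * ∏ i, (C (u i) * X i) ^ k i =
        monomial (Finsupp.equivFunOnFinite.symm k)
          ((Nat.multinomial univ k : ℂ) * ∏ i, u i ^ k i) := by
    intro k
    have hX : ∏ i : Fin n, (X i : MvPolynomial (Fin n) ℂ) ^ k i =
        monomial (Finsupp.equivFunOnFinite.symm k) 1 := by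
      rw [← prod_X_pow_eq_monomial]
      exact (Finset.prod_subset (subset_univ _) (fun x _ hx => by
        have : (Finsupp.equivFunOnFinite.symm k) x = 0 := Finsupp.notMem_support_iff.mp hx
        simp_all)).symm
    simp_rw [mul_pow]
    rw [Finset.prod_mul_distrib, hX]
    simp_rw [← C_pow]
    rw [← map_prod (C : ℂ →+* MvPolynomial (Fin n) ℂ) (fun x => u x ^ k x) univ, ← mul_assoc,
      show ((Nat.multinomial univ k : MvPolynomial (Fin n) ℂ)) = C (Nat.multinomial univ k : ℂ) by
        simp, ← C_mul, C_mul_monomial, mul_one]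
  simp_rw [key, MvPolynomial.coeff_sum, coeff_monomial, Equiv.symm_apply_eq]
  rw [Finset.sum_ite_eq' (piAntidiag univ d) (Finsupp.equivFunOnFinite α)]
  simp only [mem_piAntidiag]
  by_cases h : ∑ i, α i = d
  · simp only [h, true_and, if_pos, and_true, forall_const, fun i => Finset.mem_univ i, if_true]
    rw [if_pos ⟨h, fun _ _ => trivial⟩]
    show (Nat.multinomial univ ⇑α : ℂ) * ∏ i, u i ^ α i = _
    rw [multinomial_univ_eq]
  · simp [h]

theorem apolar_linPow_eq_eval {n d : ℕ} (u : Fin n → ℂ) (Q : MvPolynomial (Fin n) ℂ)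
    (hQ : Q.IsHomogeneous d) :
    apolar (linPow u d) Q = MvPolynomial.eval (fun i => starRingEnd ℂ (u i)) Q := by
  have hdeg : ∀ α ∈ (linPow u d).support ∪ Q.support, (∑ i, α i) = d := by
    intro α hα
    have hdegα : ∀ β : Fin n →₀ ℕ, β.degree = ∑ i, β i := fun β =>
      Finset.sum_subset (subset_univ _) fun x _ hx => Finsupp.notMem_support_iff.mp hx
    rcases Finset.mem_union.mp hα with h | h
    · have := MvPolynomial.mem_support_iff.mp h
      rw [coeff_linPow] at this
      by_contra hc
      exact this (if_neg hc)
    · by_contra hc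
      exact MvPolynomial.mem_support_iff.mp h (hQ.coeff_eq_zero (by rw [hdegα]; exact hc))
  have hterm : ∀ α ∈ (linPow u d).support ∪ Q.support,
      starRingEnd ℂ ((linPow u d).coeff α) * Q.coeff α / (α.multinomial : ℂ) =
        Q.coeff α * ∏ i, starRingEnd ℂ (u i) ^ α i := by
    intro α hα
    rw [coeff_linPow, if_pos (hdeg α hα)]
    rw [_root_.map_mul, map_prod]
    simp only [map_pow, map_natCast]
    have hm : (α.multinomial : ℂ) ≠ 0 := by
      have : 0 < α.multinomial := by rw [Finsupp.multinomial_eq]; exact Nat.multinomial_pos _ _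
      exact_mod_cast this.ne'
    field_simp
  unfold apolar
  rw [Finset.sum_congr rfl hterm]
  rw [← Finset.sum_subset Finset.subset_union_right
    (fun α _ hα => by rw [MvPolynomial.notMem_support_iff.mp hα, zero_mul])]
  rw [MvPolynomial.eval_eq']

theorem isHomogeneous_linForm {n : ℕ} (v : Fin n → ℂ) : (linForm v).IsHomogeneous 1 :=
  IsHomogeneous.sum _ _ _ fun i _ => by
    simpa using (MvPolynomial.isHomogeneous_X ℂ i).C_mul (v i)

theorem isHomogeneous_linPow {n d : ℕ} (v : Fin n → ℂ) : (linPow v d).IsHomogeneous d := by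
  simpa [linPow] using (isHomogeneous_linForm v).pow d

/-- for `P = Φ(v) ∈ V_n^d`, a tangent vector
`Q = d (vᵗx)^{d-1}(qᵗx) ∈ T_P V_n^d` and a unit-norm first left singular vector `u` of
`H_{P+Q}^{1,d-1}`, the retraction has the explicit expression
`R_P(Q) = Π_u(P+Q) = (P(ū) + Q(ū)) (uᵗx)^d`. -/
theorem retraction_explicit_formula {n d : ℕ} (hd : 1 ≤ d)
    (v q : Fin n → ℂ) (hv : v ≠ 0)
    (u : Fin n → ℂ)
    (hu : IsFirstLeftSingular d
      (linPow v d + (d : ℂ) • (linPow v (d - 1) * linForm q)) u)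
    (hnorm : ∑ i, Complex.normSq (u i) = 1) :
    projLine d u (linPow v d + (d : ℂ) • (linPow v (d - 1) * linForm q)) =
      MvPolynomial.C
          (MvPolynomial.eval (fun i => starRingEnd ℂ (u i))
            (linPow v d + (d : ℂ) • (linPow v (d - 1) * linForm q))) *
        linPow u d := by
  set Q := linPow v d + (d : ℂ) • (linPow v (d - 1) * linForm q) with hQdef
  have hQhom : Q.IsHomogeneous d := by
    apply (isHomogeneous_linPow v).add
    rw [smul_eq_C_mul]
    have : (d - 1) + 1 = d := Nat.succ_pred_eq_of_pos hd
    simpa [this] using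
      (((isHomogeneous_linPow v (d := d - 1)).mul (isHomogeneous_linForm q)).C_mul (d : ℂ))
  have hself : apolar (linPow u d) (linPow u d) = 1 := by
    rw [apolar_linPow_eq_eval u _ (isHomogeneous_linPow u)]
    unfold linPow
    rw [map_pow]
    have : MvPolynomial.eval (fun i => starRingEnd ℂ (u i)) (linForm u) = 1 := by
      unfold linForm
      rw [map_sum]
      simp only [_root_.map_mul, eval_C, eval_X]
      calc ∑ i, u i * starRingEnd ℂ (u i)
          = ∑ i, ((Complex.normSq (u i) : ℂ)) := by
            refine Finset.sum_congr rfl fun i _ => ?_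
            rw [Complex.mul_conj]
        _ = ((∑ i, Complex.normSq (u i) : ℝ) : ℂ) := by push_cast; ring
        _ = 1 := by rw [hnorm]; norm_num
    rw [this, one_pow]
  unfold projLine
  rw [hself, div_one, apolar_linPow_eq_eval u Q hQhom, smul_eq_C_mul]

end
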